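/- Let R be a commutative ring and p, q, r, α, β, γ ∈ R with pα + qβ + rγ = 1. Then the determinant of the 3×3 matrix with rows (α², β, γ), (β + rα, −r² + prβ, −p + qr − pqβ), (γ − qα, p + qr + prγ, −q² − pqγ) equals 1. -/
import Mathlib

/-- Swan–Towber identity: if `p*α + q*β + r*γ = 1`, then the explicit 3×3 matrix
with first row `(α², β, γ)` has determinant 1. -/
theorem swan_towber {R : Type*} [CommRing R] (p q r α β γ : R)
    (h : p * α + q * β + r * γ = 1) :
    (Matrix.det !![α ^ 2, β, γ;
                   β + r * α, -r ^ 2 + p * r * β, -p + q * r - p * q * β;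
                   γ - q * α, p + q * r + p * r * γ, -q ^ 2 - p * q * γ]) = 1 := by
  simp [Matrix.det_fin_three]
  linear_combination ((p*α + q*β + r*γ) + 1 + α*p*(q*β + r*γ)) * h
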